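/- For a signed bipartite graph (G, σ) and integer k ≥ 2: χ_c(G, σ) ≤ 4k/(2k−1) if and only if (G, σ) admits a switching homomorphism to the negative even cycle C_{−2k}. -/
import Mathlib


/-- A signed graph: two symmetric edge relations (positive and negative edges).
Parallel edges of different signs (digons) and negative loops are representable;
positive loops are disallowed (graphs in the paper have no loops unless specified,
loops occurring in circular cliques are always negative). -/
structure SGraph (V : Type) where
  pos : V → V → Prop
  neg : V → V → Prop
  pos_symm : ∀ u v, pos u v → pos v u
  neg_symm : ∀ u v, neg u v → neg v u
  pos_irrefl : ∀ v, ¬ pos v v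

namespace SGraph

variable {V W : Type}

/-- An edge-sign preserving homomorphism: preserves adjacency and edge signs. -/
def IsSpHom (G : SGraph V) (H : SGraph W) (f : V → W) : Prop :=
  (∀ u v, G.pos u v → H.pos (f u) (f v)) ∧ (∀ u v, G.neg u v → H.neg (f u) (f v))

/-- The signed graph obtained from `G` by switching at the set of vertices where `s` is `true`:
the sign of an edge is flipped exactly when its endpoints get different values of `s`. -/
def switch (G : SGraph V) (s : V → Bool) : SGraph V where
  pos u v := (s u = s v ∧ G.pos u v) ∨ (s u ≠ s v ∧ G.neg u v)
  neg u v := (s u = s v ∧ G.neg u v) ∨ (s u ≠ s v ∧ G.pos u v)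
  pos_symm := by
    rintro u v (⟨h, hp⟩ | ⟨h, hn⟩)
    · exact Or.inl ⟨h.symm, G.pos_symm u v hp⟩
    · exact Or.inr ⟨fun e => h e.symm, G.neg_symm u v hn⟩
  neg_symm := by
    rintro u v (⟨h, hn⟩ | ⟨h, hp⟩)
    · exact Or.inl ⟨h.symm, G.neg_symm u v hn⟩
    · exact Or.inr ⟨fun e => h e.symm, G.pos_symm u v hp⟩
  pos_irrefl := by
    rintro v (⟨_, hp⟩ | ⟨h, _⟩)
    · exact G.pos_irrefl v hp
    · exact h rfl

/-- A switching homomorphism: an edge-sign preserving homomorphism after switching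
at a suitable set of vertices of the source (equivalently, a vertex map preserving
adjacency and the signs of closed walks). -/
def SwHom (G : SGraph V) (H : SGraph W) : Prop :=
  ∃ (s : V → Bool) (f : V → W), (G.switch s).IsSpHom H f

/-- The underlying graph of the signed graph is bipartite. -/
def Bipartite (G : SGraph V) : Prop :=
  ∃ c : V → Bool, ∀ u v, G.pos u v ∨ G.neg u v → c u ≠ c v

end SGraph

/-- `x` reduced modulo `r` into `[0, r)` (for `r > 0`). -/
noncomputable def rmod (x r : ℝ) : ℝ := x - r * ⌊x / r⌋

/-- The circular distance between the points `x` and `y` of the circle of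
circumference `r` (the length of the shorter arc joining them). -/
noncomputable def cdist (r x y : ℝ) : ℝ := min (rmod (x - y) r) (rmod (y - x) r)

namespace SGraph

variable {V : Type}

/-- A circular `r`-coloring of a signed graph: vertices get points of a circle of
circumference `r` such that the endpoints of each positive edge are at circular
distance at least `1`, and each endpoint of a negative edge is at circular distance
at least `1` from the antipode of the other endpoint (equivalently, the endpoints of
a negative edge are at circular distance at most `r/2 - 1`). -/
def IsCircColoring (G : SGraph V) (r : ℝ) (φ : V → ℝ) : Prop :=
  (∀ u v, G.pos u v → 1 ≤ cdist r (φ u) (φ v)) ∧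
  (∀ u v, G.neg u v → 1 ≤ cdist r (φ u) (φ v + r / 2))

/-- The circular chromatic number of a signed graph. -/
noncomputable def circChrom (G : SGraph V) : ℝ :=
  sInf {r : ℝ | 1 ≤ r ∧ ∃ φ : V → ℝ, G.IsCircColoring r φ}

end SGraph

/-- The negative cycle `C_{-n}`: the cycle on vertices `0, …, n-1` with exactly one
negative edge, namely the edge between `0` and `1`. -/
def negCycle (n : ℕ) : SGraph (Fin n) where
  pos i j := i ≠ j ∧ (j.val = (i.val + 1) % n ∨ i.val = (j.val + 1) % n) ∧
    ¬((i.val = 0 ∧ j.val = 1) ∨ (j.val = 0 ∧ i.val = 1))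
  neg i j := ((i.val = 0 ∧ j.val = 1) ∨ (j.val = 0 ∧ i.val = 1)) ∧
    (j.val = (i.val + 1) % n ∨ i.val = (j.val + 1) % n)
  pos_symm := by
    rintro i j ⟨hne, hc, hm⟩
    exact ⟨hne.symm, hc.symm, fun h => hm h.symm⟩
  neg_symm := by
    rintro i j ⟨hm, hc⟩
    exact ⟨hm.symm, hc.symm⟩
  pos_irrefl := fun i h => h.1 rfl

section Aux

lemma rmod_eq_fract {r : ℝ} (hr : r ≠ 0) (x : ℝ) : rmod x r = r * Int.fract (x / r) := by
  unfold rmod Int.fract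
  field_simp

lemma rmod_nonneg {r : ℝ} (hr : 0 < r) (x : ℝ) : 0 ≤ rmod x r := by
  rw [rmod_eq_fract hr.ne' x]
  exact mul_nonneg hr.le (Int.fract_nonneg _)

lemma rmod_lt {r : ℝ} (hr : 0 < r) (x : ℝ) : rmod x r < r := by
  rw [rmod_eq_fract hr.ne' x]
  nlinarith [Int.fract_lt_one (x / r)]

lemma rmod_add_int_mul {r : ℝ} (hr : 0 < r) (x : ℝ) (m : ℤ) :
    rmod (x + m * r) r = rmod x r := by
  rw [rmod_eq_fract hr.ne', rmod_eq_fract hr.ne']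
  have : (x + m * r) / r = x / r + m := by field_simp
  rw [this, Int.fract_add_intCast]

lemma rmod_eq_self {r : ℝ} (hr : 0 < r) {x : ℝ} (h0 : 0 ≤ x) (h1 : x < r) :
    rmod x r = x := by
  rw [rmod_eq_fract hr.ne', Int.fract_eq_self.2 ⟨by positivity, by rwa [div_lt_one hr]⟩]
  field_simp

lemma rmod_spec {r : ℝ} (hr : 0 < r) (x : ℝ) : ∃ m : ℤ, rmod x r = x + m * r := by
  exact ⟨-⌊x / r⌋, by unfold rmod; push_cast; ring⟩

lemma cdist_comm (r x y : ℝ) : cdist r x y = cdist r y x := min_comm _ _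

lemma cdist_eq_of_sub_eq {r x y x' y' : ℝ} (h : x - y = x' - y') :
    cdist r x y = cdist r x' y' := by
  unfold cdist
  rw [h, show y - x = y' - x' by linarith]

lemma rmod_le_self {r : ℝ} (hr : 0 < r) {x : ℝ} (hx : 0 ≤ x) : rmod x r ≤ x := by
  unfold rmod
  have h1 : (0:ℤ) ≤ ⌊x / r⌋ := Int.floor_nonneg.2 (by positivity)
  have : (0:ℝ) ≤ r * ⌊x / r⌋ := mul_nonneg hr.le (by exact_mod_cast h1)
  linarith

lemma rmod_zero_neg {r : ℝ} (hr : 0 < r) {x : ℝ} (h : rmod x r = 0) : rmod (-x) r = 0 := by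
  obtain ⟨m, hm⟩ := rmod_spec hr x
  have hx : -x = 0 + m * r := by rw [hm] at h; linarith
  rw [hx, rmod_add_int_mul hr, rmod_eq_self hr le_rfl hr]

lemma rmod_sub_int_mul {r : ℝ} (hr : 0 < r) (x : ℝ) (m : ℤ) :
    rmod (x - m * r) r = rmod x r := by
  rw [show x - m*r = x + ((-m : ℤ) : ℝ) * r by push_cast; ring, rmod_add_int_mul hr]

lemma rmod_neg_eq {r : ℝ} (hr : 0 < r) {x : ℝ} (h : rmod x r ≠ 0) :
    rmod (-x) r = r - rmod x r := by
  obtain ⟨m, hm⟩ := rmod_spec hr x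
  have h0 : 0 ≤ rmod x r := rmod_nonneg hr x
  have h1 : rmod x r < r := rmod_lt hr x
  have hx : -x = (r - rmod x r) + ((m - 1 : ℤ) : ℝ) * r := by rw [hm]; push_cast; ring
  rw [hx, rmod_add_int_mul hr, rmod_eq_self hr (by linarith) (by
    rcases lt_or_eq_of_le h0 with h' | h'
    · linarith
    · exact absurd h'.symm h)]

lemma cdist_ge_iff {r c : ℝ} (hr : 0 < r) (hc : 0 < c) (x y : ℝ) :
    c ≤ cdist r x y ↔ c ≤ rmod (x - y) r ∧ rmod (x - y) r ≤ r - c := by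
  unfold cdist
  constructor
  · intro h
    have h1 := le_trans h (min_le_left _ _)
    have h2 := le_trans h (min_le_right _ _)
    refine ⟨h1, ?_⟩
    have hne : rmod (x - y) r ≠ 0 := by intro h0; linarith
    have := rmod_neg_eq hr hne
    rw [show -(x-y) = y - x by ring] at this
    linarith
  · rintro ⟨h1, h2⟩
    have hne : rmod (x - y) r ≠ 0 := by intro h0; linarith
    have := rmod_neg_eq hr hne
    rw [show -(x-y) = y - x by ring] at this
    exact le_min h1 (by linarith)

lemma cdist_le_abs {r : ℝ} (hr : 0 < r) (x y : ℝ) (m : ℤ) :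
    cdist r x y ≤ |x - y - m * r| := by
  rcases le_or_gt 0 (x - y - m * r) with h | h
  · rw [abs_of_nonneg h]
    calc cdist r x y ≤ rmod (x - y) r := min_le_left _ _
    _ = rmod (x - y - m * r) r := (rmod_sub_int_mul hr _ m).symm
    _ ≤ x - y - m * r := rmod_le_self hr h
  · rw [abs_of_neg h]
    calc cdist r x y ≤ rmod (y - x) r := min_le_right _ _
    _ = rmod (-(x - y - m * r)) r := by
        rw [show -(x - y - m*r) = (y - x) + m * r by ring, rmod_add_int_mul hr]
    _ ≤ -(x - y - m * r) := rmod_le_self hr (by linarith)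

lemma cdist_eq_abs {r : ℝ} (hr : 0 < r) (x y : ℝ) :
    ∃ m : ℤ, cdist r x y = |x - y - m * r| := by
  rcases min_cases (rmod (x - y) r) (rmod (y - x) r) with ⟨h, _⟩ | ⟨h, _⟩
  · obtain ⟨m, hm⟩ := rmod_spec hr (x - y)
    refine ⟨-m, ?_⟩
    have hx : x - y - ((-m : ℤ) : ℝ) * r = rmod (x - y) r := by rw [hm]; push_cast; ring
    unfold cdist
    rw [h, hx, abs_of_nonneg (rmod_nonneg hr _)]
  · obtain ⟨m', hm'⟩ := rmod_spec hr (y - x)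
    refine ⟨m', ?_⟩
    unfold cdist
    rw [h, show x - y - ((m' : ℤ) : ℝ) * r = -(rmod (y - x) r) by rw [hm']; push_cast; ring,
      abs_neg, abs_of_nonneg (rmod_nonneg hr _)]

lemma cdist_lipschitz {r : ℝ} (hr : 0 < r) (x x' y y' : ℝ) :
    cdist r x' y' ≤ cdist r x y + |x' - x| + |y - y'| := by
  obtain ⟨m, hm⟩ := cdist_eq_abs hr x y
  calc cdist r x' y' ≤ |x' - y' - m * r| := cdist_le_abs hr _ _ m
  _ ≤ |x - y - m * r| + (|x' - x| + |y - y'|) := by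
      have : x' - y' - m*r = (x - y - m*r) + ((x' - x) + (y - y')) := by ring
      rw [this]
      refine le_trans (abs_add_le _ _) (by gcongr; exact abs_add_le _ _)
  _ = cdist r x y + |x' - x| + |y - y'| := by rw [hm]; ring

lemma cdist_add_int_mul {r : ℝ} (hr : 0 < r) (x y : ℝ) (m : ℤ) :
    cdist r (x + m * r) y = cdist r x y := by
  unfold cdist
  rw [show x + m*r - y = (x - y) + m*r by ring, rmod_add_int_mul hr,
    show y - (x + m*r) = (y - x) - m * r by ring, rmod_sub_int_mul hr]

lemma cdist_homog {r c : ℝ} (hr : 0 < r) (hc : 0 < c) (x y : ℝ) :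
    cdist (c * r) (c * x) (c * y) = c * cdist r x y := by
  have hrm : ∀ z : ℝ, rmod (c * z) (c * r) = c * rmod z r := by
    intro z
    rw [rmod_eq_fract (by positivity), rmod_eq_fract hr.ne',
      show c * z / (c * r) = z / r by field_simp]
    ring
  unfold cdist
  rw [show c*x - c*y = c * (x - y) by ring, show c*y - c*x = c*(y-x) by ring, hrm, hrm,
    mul_min_of_nonneg _ _ hc.le]

lemma one_le_cdist_of_diff {r x y : ℝ} (hr : 2 ≤ r) (m : ℤ)
    (h : x - y = 1 + m * r ∨ x - y = -1 + m * r) : 1 ≤ cdist r x y := by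
  have hr0 : (0:ℝ) < r := by linarith
  have h1 : rmod 1 r = 1 := rmod_eq_self hr0 (by norm_num) (by linarith)
  have key : ∀ z w : ℝ, z - w = 1 → 1 ≤ cdist r z w := by
    intro z w hzw
    rw [cdist_ge_iff hr0 one_pos, hzw, h1]
    exact ⟨le_rfl, by linarith⟩
  rcases h with h | h
  · have : cdist r x y = cdist r (1 + (m:ℝ) * r) 0 := cdist_eq_of_sub_eq (by linarith)
    rw [this, cdist_add_int_mul hr0]
    exact key 1 0 (by ring)
  · have : cdist r x y = cdist r (-1 + (m:ℝ) * r) 0 := cdist_eq_of_sub_eq (by linarith)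
    rw [this, cdist_add_int_mul hr0, cdist_comm]
    exact key 0 (-1) (by ring)

lemma pullback {V W : Type} (G : SGraph V) (H : SGraph W) (s : V → Bool) (f : V → W)
    (hhom : (G.switch s).IsSpHom H f) (r : ℝ) (hr : 0 < r) (ψ : W → ℝ)
    (hψ : H.IsCircColoring r ψ) :
    G.IsCircColoring r (fun v => ψ (f v) + (if s v then r / 2 else 0)) := by
  obtain ⟨hP, hN⟩ := hhom
  obtain ⟨hψP, hψN⟩ := hψ
  constructor
  · intro u v huv
    show 1 ≤ cdist r (ψ (f u) + (if s u then r/2 else 0)) (ψ (f v) + (if s v then r/2 else 0))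
    cases hsu : s u <;> cases hsv : s v <;> simp only [Bool.false_eq_true, ite_true, ite_false]
    · have hH := hψP _ _ (hP u v (Or.inl ⟨by rw [hsu, hsv], huv⟩))
      rwa [cdist_eq_of_sub_eq (show ψ (f u) + 0 - (ψ (f v) + 0) = ψ (f u) - ψ (f v) by ring)]
    · have hH := hψN _ _ (hN u v (Or.inr ⟨by simp [hsu, hsv], huv⟩))
      rwa [cdist_eq_of_sub_eq (show ψ (f u) + 0 - (ψ (f v) + r/2) = ψ (f u) - (ψ (f v) + r/2) by ring)]
    · have hH := hψN _ _ (hN u v (Or.inr ⟨by simp [hsu, hsv], huv⟩))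
      have e1 : cdist r (ψ (f u) + r/2) (ψ (f v) + 0) =
          cdist r (ψ (f u) + (1:ℤ) * r) (ψ (f v) + r/2) := cdist_eq_of_sub_eq (by push_cast; ring)
      rwa [e1, cdist_add_int_mul hr]
    · have hH := hψP _ _ (hP u v (Or.inl ⟨by rw [hsu, hsv], huv⟩))
      rwa [cdist_eq_of_sub_eq (show ψ (f u) + r/2 - (ψ (f v) + r/2) = ψ (f u) - ψ (f v) by ring)]
  · intro u v huv
    show 1 ≤ cdist r (ψ (f u) + (if s u then r/2 else 0)) (ψ (f v) + (if s v then r/2 else 0) + r/2)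
    cases hsu : s u <;> cases hsv : s v <;> simp only [Bool.false_eq_true, ite_true, ite_false]
    · have hH := hψN _ _ (hN u v (Or.inl ⟨by rw [hsu, hsv], huv⟩))
      rwa [cdist_eq_of_sub_eq (show ψ (f u) + 0 - (ψ (f v) + 0 + r/2) = ψ (f u) - (ψ (f v) + r/2) by ring)]
    · have hH := hψP _ _ (hP u v (Or.inr ⟨by simp [hsu, hsv], huv⟩))
      have e1 : cdist r (ψ (f u) + 0) (ψ (f v) + r/2 + r/2) =
          cdist r (ψ (f u) + (-1:ℤ) * r) (ψ (f v)) := cdist_eq_of_sub_eq (by push_cast; ring)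
      rwa [e1, cdist_add_int_mul hr]
    · have hH := hψP _ _ (hP u v (Or.inr ⟨by simp [hsu, hsv], huv⟩))
      rwa [cdist_eq_of_sub_eq (show ψ (f u) + r/2 - (ψ (f v) + 0 + r/2) = ψ (f u) - ψ (f v) by ring)]
    · have hH := hψN _ _ (hN u v (Or.inl ⟨by rw [hsu, hsv], huv⟩))
      rwa [cdist_eq_of_sub_eq (show ψ (f u) + r/2 - (ψ (f v) + r/2 + r/2) = ψ (f u) - (ψ (f v) + r/2) by ring)]

lemma negCycle_coloring (k : ℕ) (hk : 2 ≤ k) :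
    (negCycle (2*k)).IsCircColoring (4*(k:ℝ)/(2*(k:ℝ)-1))
      (fun i => if (i:ℕ) = 0 then 1 - 2*(k:ℝ) else 1 - ((i:ℕ):ℝ)) := by
  set r : ℝ := 4*(k:ℝ)/(2*(k:ℝ)-1) with hrdef
  have hkR : (2:ℝ) ≤ (k:ℝ) := by exact_mod_cast hk
  have hden : (0:ℝ) < 2*(k:ℝ)-1 := by linarith
  have hr2 : 2 ≤ r := by rw [hrdef, le_div_iff₀ hden]; linarith
  set ψ : Fin (2*k) → ℝ := fun i => if (i:ℕ) = 0 then 1 - 2*(k:ℝ) else 1 - ((i:ℕ):ℝ) with hψdef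
  have hψ0 : ∀ i : Fin (2*k), (i:ℕ) = 0 → ψ i = 1 - 2*(k:ℝ) := by
    intro i h; simp only [hψdef, h, if_pos]
  have hψn : ∀ i : Fin (2*k), (i:ℕ) ≠ 0 → ψ i = 1 - ((i:ℕ):ℝ) := by
    intro i h; simp only [hψdef, if_neg h]
  -- consecutive step helper
  have step : ∀ i j : Fin (2*k), (j:ℕ) = ((i:ℕ)+1) % (2*k) →
      ¬(((i:ℕ) = 0 ∧ (j:ℕ) = 1) ∨ ((j:ℕ) = 0 ∧ (i:ℕ) = 1)) → ψ i - ψ j = 1 := by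
    intro i j hj hnm
    have hik : (i:ℕ) < 2*k := i.isLt
    rcases lt_or_eq_of_le (Nat.succ_le_of_lt hik) with h1 | h1
    · -- i+1 < 2k, so j = i+1
      have hj' : (j:ℕ) = (i:ℕ) + 1 := by rw [hj, Nat.mod_eq_of_lt h1]
      have hi0 : (i:ℕ) ≠ 0 := by
        intro h0; exact hnm (Or.inl ⟨h0, by omega⟩)
      rw [hψn i hi0, hψn j (by omega), hj']
      push_cast
      ring
    · -- i = 2k-1, j = 0
      have hj' : (j:ℕ) = 0 := by rw [hj, show (i:ℕ)+1 = 2*k from h1, Nat.mod_self]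
      have hi' : (i:ℕ) = 2*k - 1 := by omega
      rw [hψn i (by omega), hψ0 j hj', hi']
      have : ((2*k-1 : ℕ) : ℝ) = 2*(k:ℝ) - 1 := by
        push_cast [Nat.cast_sub (by omega : 1 ≤ 2*k)]; ring
      rw [this]; ring
  constructor
  · rintro i j ⟨hne, hc, hnm⟩
    rcases hc with hc | hc
    · exact one_le_cdist_of_diff hr2 0 (Or.inl (by rw [step i j hc hnm]; push_cast; ring))
    · rw [cdist_comm]
      have hnm' : ¬(((j:ℕ) = 0 ∧ (i:ℕ) = 1) ∨ ((i:ℕ) = 0 ∧ (j:ℕ) = 1)) := fun h => hnm h.symm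
      exact one_le_cdist_of_diff hr2 0 (Or.inl (by rw [step j i hc hnm']; push_cast; ring))
  · rintro i j ⟨hm, _⟩
    rcases hm with ⟨hi, hj⟩ | ⟨hj, hi⟩
    · -- i = 0, j = 1
      rw [hψ0 i hi, hψn j (by omega)]
      refine one_le_cdist_of_diff hr2 (-k) (Or.inl ?_)
      rw [hj]
      push_cast
      rw [hrdef]
      field_simp
      ring
    · -- j = 0, i = 1
      rw [hψn i (by omega), hψ0 j hj]
      refine one_le_cdist_of_diff hr2 ((k:ℤ)-1) (Or.inr ?_)
      rw [hi]
      push_cast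
      rw [hrdef]
      field_simp
      ring

section Discrete

variable {k : ℕ}

lemma round_step (hk : 2 ≤ k) {D e1 e2 : ℝ} {N : ℤ}
    (hD : (N:ℝ) + e1 - e2 = D)
    (he1 : 0 ≤ e1) (he1' : e1 < 2) (he2 : 0 ≤ e2) (he2' : e2 < 2)
    (hodd : N % 2 = 1)
    (hs : 2*(k:ℝ)-1 ≤ rmod D (4*(k:ℝ)) ∧ rmod D (4*(k:ℝ)) ≤ 2*(k:ℝ)+1) :
    ∃ M : ℤ, N = 4*(k:ℤ)*M + (2*k-1) ∨ N = 4*(k:ℤ)*M + (2*k+1) := by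
  have hk4 : (0:ℝ) < 4*(k:ℝ) := by
    have : (2:ℝ) ≤ (k:ℝ) := by exact_mod_cast hk
    linarith
  obtain ⟨m, hm⟩ := rmod_spec hk4 D
  obtain ⟨Nr, hNr⟩ : ∃ Nr : ℤ, Nr = N + 4*(k:ℤ)*m := ⟨_, rfl⟩
  have hcast : (Nr:ℝ) = rmod D (4*(k:ℝ)) - e1 + e2 := by
    rw [hNr, hm, ← hD]; push_cast; ring
  have hb1 : (2*(k:ℤ)-3 : ℤ) < Nr := by
    have : (2*(k:ℝ)-3 : ℝ) < (Nr:ℝ) := by rw [hcast]; linarith [hs.1]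
    exact_mod_cast this
  have hb2 : Nr < 2*(k:ℤ)+3 := by
    have : (Nr:ℝ) < (2*(k:ℝ)+3 : ℝ) := by rw [hcast]; linarith [hs.2]
    exact_mod_cast this
  obtain ⟨c, hc⟩ : ∃ c : ℤ, Nr = N + 2*c := ⟨2*k*m, by rw [hNr]; ring⟩
  have hdisj : Nr = 2*(k:ℤ)-1 ∨ Nr = 2*(k:ℤ)+1 := by omega
  rcases hdisj with h | h
  · exact ⟨-m, Or.inl (by rw [show N = Nr - 4*(k:ℤ)*m by rw [hNr]; ring, h]; ring)⟩
  · exact ⟨-m, Or.inr (by rw [show N = Nr - 4*(k:ℤ)*m by rw [hNr]; ring, h]; ring)⟩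

lemma adjust (hk : 1 ≤ k) {x t : ℤ} (hx : -(4*(k:ℤ)) < x) (hx' : x < 4*k)
    (ht0 : 0 < t) (ht1 : t < 4*(k:ℤ)) (h : ∃ M : ℤ, x = 4*k*M + t) :
    x = t ∨ x = t - 4*k := by
  obtain ⟨M, hM⟩ := h
  have hk4 : (0:ℤ) < 4*(k:ℤ) := by positivity
  have hM' : M = 0 ∨ M = -1 := by
    by_contra hcon
    push_neg at hcon
    have : 1 ≤ M ∨ M ≤ -2 := by omega
    rcases this with h' | h'
    · nlinarith
    · nlinarith
  rcases hM' with h' | h'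
  · left; rw [h'] at hM; linarith
  · right; rw [h'] at hM; linarith

lemma cycPos_adj (hk : 2 ≤ k) {x y : ℕ} (hx : x < 2*k) (hy : y < 2*k)
    (h : (y = x + 1 ∧ ¬(x = 0 ∧ y = 1)) ∨ (x = y + 1 ∧ ¬(y = 0 ∧ x = 1)) ∨
      (x = 2*k-1 ∧ y = 0) ∨ (y = 2*k-1 ∧ x = 0)) :
    (negCycle (2*k)).pos ⟨x, hx⟩ ⟨y, hy⟩ := by
  rcases h with ⟨h1, h2⟩ | ⟨h1, h2⟩ | ⟨h1, h2⟩ | ⟨h1, h2⟩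
  · refine ⟨by simp [Fin.ext_iff]; omega, Or.inl ?_, by simp; omega⟩
    show y = (x + 1) % (2*k)
    rw [Nat.mod_eq_of_lt (by omega)]; omega
  · refine ⟨by simp [Fin.ext_iff]; omega, Or.inr ?_, by simp; omega⟩
    show x = (y + 1) % (2*k)
    rw [Nat.mod_eq_of_lt (by omega)]; omega
  · refine ⟨by simp [Fin.ext_iff]; omega, Or.inl ?_, by simp; omega⟩
    show y = (x + 1) % (2*k)
    rw [show x + 1 = 2*k by omega, Nat.mod_self]; omega
  · refine ⟨by simp [Fin.ext_iff]; omega, Or.inr ?_, by simp; omega⟩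
    show x = (y + 1) % (2*k)
    rw [show y + 1 = 2*k by omega, Nat.mod_self]; omega

lemma cycNeg01 (hk : 2 ≤ k) {x y : ℕ} (hx : x < 2*k) (hy : y < 2*k)
    (h : (x = 0 ∧ y = 1) ∨ (x = 1 ∧ y = 0)) :
    (negCycle (2*k)).neg ⟨x, hx⟩ ⟨y, hy⟩ := by
  rcases h with ⟨h1, h2⟩ | ⟨h1, h2⟩
  · exact ⟨Or.inl ⟨h1, h2⟩, Or.inl (by show y = (x+1) % (2*k); rw [h1, h2, Nat.mod_eq_of_lt (by omega)])⟩
  · exact ⟨Or.inr ⟨h2, h1⟩, Or.inr (by show x = (y+1) % (2*k); rw [h1, h2, Nat.mod_eq_of_lt (by omega)])⟩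


def Fmap (k : ℕ) (hk : 0 < k) (z : ℤ) : Fin (2*k) :=
  ⟨(z % (2*(k:ℤ))).toNat, by
    have h2 : (0:ℤ) < 2*(k:ℤ) := by positivity
    have h1 : 0 ≤ z % (2*(k:ℤ)) := Int.emod_nonneg z h2.ne'
    have h3 : z % (2*(k:ℤ)) < 2*(k:ℤ) := Int.emod_lt_of_pos z h2
    omega⟩

lemma Fmap_eq {k : ℕ} (hkpos : 0 < k) {z : ℤ} {x : ℕ} (hx : x < 2*k)
    (h : z = (x:ℤ) ∨ z = (x:ℤ) + 2*(k:ℤ)) :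
    Fmap k hkpos z = ⟨x, hx⟩ := by
  apply Fin.ext
  show (z % (2*(k:ℤ))).toNat = x
  have h2 : (0:ℤ) < 2*(k:ℤ) := by positivity
  rcases h with h | h
  · rw [h, Int.emod_eq_of_lt (by positivity) (by exact_mod_cast hx)]
    omega
  · rw [h, show (x:ℤ) + 2*(k:ℤ) = (x:ℤ) + 2*(k:ℤ)*1 by ring, Int.add_mul_emod_self_left,
      Int.emod_eq_of_lt (by positivity) (by exact_mod_cast hx)]
    omega

lemma geomPos {k : ℕ} (hk : 2 ≤ k) (hkpos : 0 < k) {au av : ℤ}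
    (hu0 : 0 ≤ au) (hu1 : au < 4*(k:ℤ)) (hv0 : 0 ≤ av) (hv1 : av < 4*(k:ℤ))
    (hd : au - av = 1 ∨ au - av = 1 - 4*(k:ℤ)) :
    (((1 ≤ au ∧ au ≤ 2*(k:ℤ)) ↔ (1 ≤ av ∧ av ≤ 2*(k:ℤ))) ∧
      (negCycle (2*k)).pos (Fmap k hkpos au) (Fmap k hkpos av)) ∨
    (¬((1 ≤ au ∧ au ≤ 2*(k:ℤ)) ↔ (1 ≤ av ∧ av ≤ 2*(k:ℤ))) ∧
      (negCycle (2*k)).neg (Fmap k hkpos au) (Fmap k hkpos av)) := by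
  rcases hd with hd | hd
  · have hcase : av = 0 ∨ (1 ≤ av ∧ av ≤ 2*(k:ℤ)-2) ∨ av = 2*(k:ℤ)-1 ∨ av = 2*(k:ℤ) ∨
        (2*(k:ℤ)+1 ≤ av ∧ av ≤ 4*(k:ℤ)-2) := by omega
    rcases hcase with h | h | h | h | h
    · refine Or.inr ⟨by omega, ?_⟩
      rw [Fmap_eq hkpos (show 1 < 2*k by omega) (Or.inl (by omega)),
        Fmap_eq hkpos (show 0 < 2*k by omega) (Or.inl (by omega))]
      exact cycNeg01 hk _ _ (Or.inr ⟨rfl, rfl⟩)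
    · refine Or.inl ⟨by omega, ?_⟩
      rw [Fmap_eq hkpos (show au.toNat < 2*k by omega) (Or.inl (by omega)),
        Fmap_eq hkpos (show av.toNat < 2*k by omega) (Or.inl (by omega))]
      exact cycPos_adj hk _ _ (Or.inr (Or.inl ⟨by omega, by omega⟩))
    · refine Or.inl ⟨by omega, ?_⟩
      rw [Fmap_eq hkpos (show 0 < 2*k by omega) (Or.inr (by omega)),
        Fmap_eq hkpos (show 2*k-1 < 2*k by omega) (Or.inl (by push_cast; omega))]
      exact cycPos_adj hk _ _ (Or.inr (Or.inr (Or.inr ⟨rfl, rfl⟩)))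
    · refine Or.inr ⟨by omega, ?_⟩
      rw [Fmap_eq hkpos (show 1 < 2*k by omega) (Or.inr (by omega)),
        Fmap_eq hkpos (show 0 < 2*k by omega) (Or.inr (by omega))]
      exact cycNeg01 hk _ _ (Or.inr ⟨rfl, rfl⟩)
    · refine Or.inl ⟨by omega, ?_⟩
      rw [Fmap_eq hkpos (show (au - 2*(k:ℤ)).toNat < 2*k by omega) (Or.inr (by omega)),
        Fmap_eq hkpos (show (av - 2*(k:ℤ)).toNat < 2*k by omega) (Or.inr (by omega))]
      exact cycPos_adj hk _ _ (Or.inr (Or.inl ⟨by omega, by omega⟩))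
  · -- au = 0, av = 4k-1
    refine Or.inl ⟨by omega, ?_⟩
    rw [Fmap_eq hkpos (show 0 < 2*k by omega) (Or.inl (by omega)),
      Fmap_eq hkpos (show 2*k-1 < 2*k by omega) (Or.inr (by push_cast; omega))]
    exact cycPos_adj hk _ _ (Or.inr (Or.inr (Or.inr ⟨rfl, rfl⟩)))

lemma geomNeg {k : ℕ} (hk : 2 ≤ k) (hkpos : 0 < k) {au av : ℤ}
    (hu0 : 0 ≤ au) (hu1 : au < 4*(k:ℤ)) (hv0 : 0 ≤ av) (hv1 : av < 4*(k:ℤ))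
    (hd : au - av = 2*(k:ℤ)+1 ∨ au - av = 1 - 2*(k:ℤ)) :
    (((1 ≤ au ∧ au ≤ 2*(k:ℤ)) ↔ (1 ≤ av ∧ av ≤ 2*(k:ℤ))) ∧
      (negCycle (2*k)).neg (Fmap k hkpos au) (Fmap k hkpos av)) ∨
    (¬((1 ≤ au ∧ au ≤ 2*(k:ℤ)) ↔ (1 ≤ av ∧ av ≤ 2*(k:ℤ))) ∧
      (negCycle (2*k)).pos (Fmap k hkpos au) (Fmap k hkpos av)) := by
  rcases hd with hd | hd
  · have hcase : av = 0 ∨ (1 ≤ av ∧ av ≤ 2*(k:ℤ)-2) := by omega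
    rcases hcase with h | h
    · refine Or.inl ⟨by omega, ?_⟩
      rw [Fmap_eq hkpos (show 1 < 2*k by omega) (Or.inr (by omega)),
        Fmap_eq hkpos (show 0 < 2*k by omega) (Or.inl (by omega))]
      exact cycNeg01 hk _ _ (Or.inr ⟨rfl, rfl⟩)
    · refine Or.inr ⟨by omega, ?_⟩
      rw [Fmap_eq hkpos (show (au - 2*(k:ℤ)).toNat < 2*k by omega) (Or.inr (by omega)),
        Fmap_eq hkpos (show av.toNat < 2*k by omega) (Or.inl (by omega))]
      exact cycPos_adj hk _ _ (Or.inr (Or.inl ⟨by omega, by omega⟩))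
  · have hcase : av = 2*(k:ℤ)-1 ∨ av = 2*(k:ℤ) ∨ (2*(k:ℤ)+1 ≤ av ∧ av ≤ 4*(k:ℤ)-2) ∨
        av = 4*(k:ℤ)-1 := by omega
    rcases hcase with h | h | h | h
    · refine Or.inr ⟨by omega, ?_⟩
      rw [Fmap_eq hkpos (show 0 < 2*k by omega) (Or.inl (by omega)),
        Fmap_eq hkpos (show 2*k-1 < 2*k by omega) (Or.inl (by push_cast; omega))]
      exact cycPos_adj hk _ _ (Or.inr (Or.inr (Or.inr ⟨rfl, rfl⟩)))
    · refine Or.inl ⟨by omega, ?_⟩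
      rw [Fmap_eq hkpos (show 1 < 2*k by omega) (Or.inl (by omega)),
        Fmap_eq hkpos (show 0 < 2*k by omega) (Or.inr (by omega))]
      exact cycNeg01 hk _ _ (Or.inr ⟨rfl, rfl⟩)
    · refine Or.inr ⟨by omega, ?_⟩
      rw [Fmap_eq hkpos (show au.toNat < 2*k by omega) (Or.inl (by omega)),
        Fmap_eq hkpos (show (av - 2*(k:ℤ)).toNat < 2*k by omega) (Or.inr (by omega))]
      exact cycPos_adj hk _ _ (Or.inr (Or.inl ⟨by omega, by omega⟩))
    · refine Or.inr ⟨by omega, ?_⟩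
      rw [Fmap_eq hkpos (show 0 < 2*k by omega) (Or.inr (by omega)),
        Fmap_eq hkpos (show 2*k-1 < 2*k by omega) (Or.inr (by push_cast; omega))]
      exact cycPos_adj hk _ _ (Or.inr (Or.inr (Or.inr ⟨rfl, rfl⟩)))


lemma discretize {V : Type} (G : SGraph V) (c : V → Bool)
    (hc : ∀ u v, G.pos u v ∨ G.neg u v → c u ≠ c v)
    {k : ℕ} (hk : 2 ≤ k) (φ : V → ℝ)
    (hφ : G.IsCircColoring (4*(k:ℝ)/(2*(k:ℝ)-1)) φ) :
    G.SwHom (negCycle (2*k)) := by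
  have hkpos : 0 < k := by omega
  have hkR : (2:ℝ) ≤ (k:ℝ) := by exact_mod_cast hk
  have hden : (0:ℝ) < 2*(k:ℝ)-1 := by linarith
  have hk4 : (0:ℝ) < 4*(k:ℝ) := by linarith
  have h4kZ : (0:ℤ) < 4*(k:ℤ) := by positivity
  set r : ℝ := 4*(k:ℝ)/(2*(k:ℝ)-1) with hrdef
  have hr0 : 0 < r := by rw [hrdef]; positivity
  have hrsc : (2*(k:ℝ)-1) * r = 4*(k:ℝ) := by rw [hrdef]; field_simp
  set Φ : V → ℝ := fun v => (2*(k:ℝ)-1) * φ v with hΦ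
  set θ : V → ℤ := fun v => if c v then 1 else 0 with hθ
  set nn : V → ℤ := fun v => 2*⌊(Φ v - (θ v : ℝ))/2⌋ + θ v with hnn
  have hee_spec : ∀ v, 0 ≤ Φ v - nn v ∧ Φ v - nn v < 2 := by
    intro v
    have he : Φ v - nn v = rmod (Φ v - (θ v : ℝ)) 2 := by
      simp only [hnn, rmod]
      push_cast
      rw [show (Φ v - (θ v : ℝ)) / 2 = (Φ v - (θ v : ℝ)) * (1/2) by ring]
      ring_nf
    rw [he]
    exact ⟨rmod_nonneg two_pos _, rmod_lt two_pos _⟩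
  have hodd : ∀ u v, c u ≠ c v → (nn u - nn v) % 2 = 1 := by
    intro u v h
    simp only [hnn, hθ]
    rcases Bool.eq_false_or_eq_true (c u) with hcu | hcu <;>
      rcases Bool.eq_false_or_eq_true (c v) with hcv | hcv <;>
      rw [hcu, hcv] at h ⊢ <;>
      simp only [Bool.false_eq_true, ite_true, ite_false] <;>
      first | (exact absurd rfl h) | omega
  -- scaled conditions
  have hposC : ∀ u v, G.pos u v → 2*(k:ℝ)-1 ≤ rmod (Φ u - Φ v) (4*(k:ℝ)) ∧
      rmod (Φ u - Φ v) (4*(k:ℝ)) ≤ 2*(k:ℝ)+1 := by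
    intro u v huv
    have h1 := hφ.1 u v huv
    have h2 : 2*(k:ℝ)-1 ≤ cdist (4*(k:ℝ)) (Φ u) (Φ v) := by
      rw [← hrsc]
      simp only [hΦ]
      rw [cdist_homog hr0 hden]
      nlinarith
    have h3 := (cdist_ge_iff hk4 hden (Φ u) (Φ v)).1 h2
    exact ⟨h3.1, by linarith [h3.2]⟩
  have hnegC : ∀ u v, G.neg u v → 2*(k:ℝ)-1 ≤ rmod (Φ u - (Φ v + 2*(k:ℝ))) (4*(k:ℝ)) ∧
      rmod (Φ u - (Φ v + 2*(k:ℝ))) (4*(k:ℝ)) ≤ 2*(k:ℝ)+1 := by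
    intro u v huv
    have h1 := hφ.2 u v huv
    have h2 : 2*(k:ℝ)-1 ≤ cdist (4*(k:ℝ)) (Φ u) (Φ v + 2*(k:ℝ)) := by
      have heq : cdist (4*(k:ℝ)) (Φ u) (Φ v + 2*(k:ℝ)) =
          cdist ((2*(k:ℝ)-1) * r) ((2*(k:ℝ)-1) * φ u) ((2*(k:ℝ)-1) * (φ v + r/2)) := by
        rw [hrsc]
        congr 1
        simp only [hΦ]
        linear_combination (-1/2) * hrsc
      rw [heq, cdist_homog hr0 hden]
      nlinarith
    have h3 := (cdist_ge_iff hk4 hden (Φ u) (Φ v + 2*(k:ℝ))).1 h2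
    exact ⟨h3.1, by linarith [h3.2]⟩
  -- the labels
  set aa : V → ℤ := fun v => (1 + (2*(k:ℤ)+1) * nn v) % (4*(k:ℤ)) with haa
  have haa0 : ∀ v, 0 ≤ aa v := fun v => Int.emod_nonneg _ h4kZ.ne'
  have haa1 : ∀ v, aa v < 4*(k:ℤ) := fun v => Int.emod_lt_of_pos _ h4kZ
  have haaq : ∀ v, ∃ q, aa v = 1 + (2*(k:ℤ)+1) * nn v - 4*(k:ℤ)*q := by
    intro v
    exact ⟨(1 + (2*(k:ℤ)+1) * nn v) / (4*(k:ℤ)), by simp only [haa]; rw [Int.emod_def]⟩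
  -- congruences on aa along edges
  have hposA : ∀ u v, G.pos u v → aa u - aa v = 1 ∨ aa u - aa v = 1 - 4*(k:ℤ) ∨
      aa v - aa u = 1 ∨ aa v - aa u = 1 - 4*(k:ℤ) := by
    intro u v huv
    have hcuv := hc u v (Or.inl huv)
    obtain ⟨Mn, hMn⟩ := round_step hk
      (show ((nn u - nn v : ℤ):ℝ) + (Φ u - nn u) - (Φ v - nn v) = Φ u - Φ v by push_cast; ring)
      (hee_spec u).1 (hee_spec u).2 (hee_spec v).1 (hee_spec v).2 (hodd u v hcuv) (hposC u v huv)
    obtain ⟨qu, hqu⟩ := haaq u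
    obtain ⟨qv, hqv⟩ := haaq v
    rcases hMn with hMn | hMn
    · -- nn u - nn v = 4kM + (2k-1) : aa u - aa v ≡ -1, i.e. av - au ≡ 1
      have key : ∃ M : ℤ, aa v - aa u = 4*(k:ℤ)*M + 1 := by
        exact ⟨-((2*(k:ℤ)+1)*Mn + k + qv - qu), by linear_combination hqv - hqu - (2*(k:ℤ)+1) * hMn⟩
      rcases adjust hkpos (by have := haa0 u; have := haa1 u; have := haa0 v; have := haa1 v; omega)
        (by have := haa0 u; have := haa1 u; have := haa0 v; have := haa1 v; omega)
        (by omega) (by omega) key with h | h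
      · exact Or.inr (Or.inr (Or.inl h))
      · exact Or.inr (Or.inr (Or.inr (by omega)))
    · have key : ∃ M : ℤ, aa u - aa v = 4*(k:ℤ)*M + 1 := by
        exact ⟨(2*(k:ℤ)+1)*Mn + k + 1 - qu + qv, by linear_combination hqu - hqv + (2*(k:ℤ)+1) * hMn⟩
      rcases adjust hkpos (by have := haa0 u; have := haa1 u; have := haa0 v; have := haa1 v; omega)
        (by have := haa0 u; have := haa1 u; have := haa0 v; have := haa1 v; omega)
        (by omega) (by omega) key with h | h
      · exact Or.inl h
      · exact Or.inr (Or.inl (by omega))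
  have hnegA : ∀ u v, G.neg u v → aa u - aa v = 2*(k:ℤ)+1 ∨ aa u - aa v = 1-2*(k:ℤ) ∨
      aa v - aa u = 2*(k:ℤ)+1 ∨ aa v - aa u = 1-2*(k:ℤ) := by
    intro u v huv
    have hcuv := hc u v (Or.inr huv)
    obtain ⟨Mn, hMn⟩ := round_step hk
      (show ((nn u - nn v - 2*(k:ℤ) : ℤ):ℝ) + (Φ u - nn u) - (Φ v - nn v) = Φ u - (Φ v + 2*(k:ℝ)) by
        push_cast; ring)
      (hee_spec u).1 (hee_spec u).2 (hee_spec v).1 (hee_spec v).2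
      (by have := hodd u v hcuv; omega) (hnegC u v huv)
    obtain ⟨qu, hqu⟩ := haaq u
    obtain ⟨qv, hqv⟩ := haaq v
    rcases hMn with hMn | hMn
    · -- nn u - nn v - 2k = 4kM + 2k - 1 : nn u - nn v = 4kM + 4k - 1, aa u - aa v ≡ 2k - 1,
      -- i.e. aa v - aa u ≡ 2k + 1 (mod 4k): aa v - aa u = 4kM' + (2k+1)
      have key : ∃ M : ℤ, aa v - aa u = 4*(k:ℤ)*M + (2*(k:ℤ)+1) := by
        refine ⟨-((2*(k:ℤ)+1)*Mn + 2*k + 1 + qv - qu), ?_⟩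
        linear_combination hqv - hqu - (2*(k:ℤ)+1) * hMn
      rcases adjust hkpos (by have := haa0 u; have := haa1 u; have := haa0 v; have := haa1 v; omega)
        (by have := haa0 u; have := haa1 u; have := haa0 v; have := haa1 v; omega)
        (by omega) (by omega) key with h | h
      · exact Or.inr (Or.inr (Or.inl h))
      · exact Or.inr (Or.inr (Or.inr (by omega)))
    · have key : ∃ M : ℤ, aa u - aa v = 4*(k:ℤ)*M + (2*(k:ℤ)+1) := by
        refine ⟨(2*(k:ℤ)+1)*Mn + 2*k + 1 - qu + qv, ?_⟩
        linear_combination hqu - hqv + (2*(k:ℤ)+1) * hMn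
      rcases adjust hkpos (by have := haa0 u; have := haa1 u; have := haa0 v; have := haa1 v; omega)
        (by have := haa0 u; have := haa1 u; have := haa0 v; have := haa1 v; omega)
        (by omega) (by omega) key with h | h
      · exact Or.inl h
      · exact Or.inr (Or.inl (by omega))
  -- assemble the switching homomorphism
  refine ⟨fun v => decide (1 ≤ aa v ∧ aa v ≤ 2*(k:ℤ)), fun v => Fmap k hkpos (aa v), ?_, ?_⟩
  · rintro u v (⟨hs, hG⟩ | ⟨hs, hG⟩)
    · have hiff : (1 ≤ aa u ∧ aa u ≤ 2*(k:ℤ)) ↔ (1 ≤ aa v ∧ aa v ≤ 2*(k:ℤ)) :=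
        decide_eq_decide.1 hs
      rcases hposA u v hG with h | h | h | h
      · rcases geomPos hk hkpos (haa0 u) (haa1 u) (haa0 v) (haa1 v) (Or.inl h) with ⟨h1, h2⟩ | ⟨h1, h2⟩
        · exact h2
        · exact absurd hiff h1
      · rcases geomPos hk hkpos (haa0 u) (haa1 u) (haa0 v) (haa1 v) (Or.inr h) with ⟨h1, h2⟩ | ⟨h1, h2⟩
        · exact h2
        · exact absurd hiff h1
      · rcases geomPos hk hkpos (haa0 v) (haa1 v) (haa0 u) (haa1 u) (Or.inl h) with ⟨h1, h2⟩ | ⟨h1, h2⟩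
        · exact (negCycle (2*k)).pos_symm _ _ h2
        · exact absurd hiff.symm h1
      · rcases geomPos hk hkpos (haa0 v) (haa1 v) (haa0 u) (haa1 u) (Or.inr h) with ⟨h1, h2⟩ | ⟨h1, h2⟩
        · exact (negCycle (2*k)).pos_symm _ _ h2
        · exact absurd hiff.symm h1
    · have hiff : ¬((1 ≤ aa u ∧ aa u ≤ 2*(k:ℤ)) ↔ (1 ≤ aa v ∧ aa v ≤ 2*(k:ℤ))) :=
        fun hif => hs (decide_eq_decide.2 hif)
      rcases hnegA u v hG with h | h | h | h
      · rcases geomNeg hk hkpos (haa0 u) (haa1 u) (haa0 v) (haa1 v) (Or.inl h) with ⟨h1, h2⟩ | ⟨h1, h2⟩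
        · exact absurd h1 hiff
        · exact h2
      · rcases geomNeg hk hkpos (haa0 u) (haa1 u) (haa0 v) (haa1 v) (Or.inr h) with ⟨h1, h2⟩ | ⟨h1, h2⟩
        · exact absurd h1 hiff
        · exact h2
      · rcases geomNeg hk hkpos (haa0 v) (haa1 v) (haa0 u) (haa1 u) (Or.inl h) with ⟨h1, h2⟩ | ⟨h1, h2⟩
        · exact absurd h1.symm hiff
        · exact (negCycle (2*k)).pos_symm _ _ h2
      · rcases geomNeg hk hkpos (haa0 v) (haa1 v) (haa0 u) (haa1 u) (Or.inr h) with ⟨h1, h2⟩ | ⟨h1, h2⟩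
        · exact absurd h1.symm hiff
        · exact (negCycle (2*k)).pos_symm _ _ h2
  · rintro u v (⟨hs, hG⟩ | ⟨hs, hG⟩)
    · have hiff : (1 ≤ aa u ∧ aa u ≤ 2*(k:ℤ)) ↔ (1 ≤ aa v ∧ aa v ≤ 2*(k:ℤ)) :=
        decide_eq_decide.1 hs
      rcases hnegA u v hG with h | h | h | h
      · rcases geomNeg hk hkpos (haa0 u) (haa1 u) (haa0 v) (haa1 v) (Or.inl h) with ⟨h1, h2⟩ | ⟨h1, h2⟩
        · exact h2
        · exact absurd hiff h1
      · rcases geomNeg hk hkpos (haa0 u) (haa1 u) (haa0 v) (haa1 v) (Or.inr h) with ⟨h1, h2⟩ | ⟨h1, h2⟩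
        · exact h2
        · exact absurd hiff h1
      · rcases geomNeg hk hkpos (haa0 v) (haa1 v) (haa0 u) (haa1 u) (Or.inl h) with ⟨h1, h2⟩ | ⟨h1, h2⟩
        · exact (negCycle (2*k)).neg_symm _ _ h2
        · exact absurd hiff.symm h1
      · rcases geomNeg hk hkpos (haa0 v) (haa1 v) (haa0 u) (haa1 u) (Or.inr h) with ⟨h1, h2⟩ | ⟨h1, h2⟩
        · exact (negCycle (2*k)).neg_symm _ _ h2
        · exact absurd hiff.symm h1
    · have hiff : ¬((1 ≤ aa u ∧ aa u ≤ 2*(k:ℤ)) ↔ (1 ≤ aa v ∧ aa v ≤ 2*(k:ℤ))) :=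
        fun hif => hs (decide_eq_decide.2 hif)
      rcases hposA u v hG with h | h | h | h
      · rcases geomPos hk hkpos (haa0 u) (haa1 u) (haa0 v) (haa1 v) (Or.inl h) with ⟨h1, h2⟩ | ⟨h1, h2⟩
        · exact absurd h1 hiff
        · exact h2
      · rcases geomPos hk hkpos (haa0 u) (haa1 u) (haa0 v) (haa1 v) (Or.inr h) with ⟨h1, h2⟩ | ⟨h1, h2⟩
        · exact absurd h1 hiff
        · exact h2
      · rcases geomPos hk hkpos (haa0 v) (haa1 v) (haa0 u) (haa1 u) (Or.inl h) with ⟨h1, h2⟩ | ⟨h1, h2⟩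
        · exact absurd h1.symm hiff
        · exact (negCycle (2*k)).neg_symm _ _ h2
      · rcases geomPos hk hkpos (haa0 v) (haa1 v) (haa0 u) (haa1 u) (Or.inr h) with ⟨h1, h2⟩ | ⟨h1, h2⟩
        · exact absurd h1.symm hiff
        · exact (negCycle (2*k)).neg_symm _ _ h2

end Discrete

end Aux

open Filter Topology in
/-- for a signed bipartite graph and `k ≥ 2`, `χ_c(G,σ) ≤ 4k/(2k-1)`
iff `(G,σ)` admits a switching homomorphism to the negative cycle `C_{-2k}`. -/
theorem circChrom_le_iff_negCycle {V : Type} [Fintype V] (G : SGraph V)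
    (hbip : G.Bipartite) (k : ℕ) (hk : 2 ≤ k) :
    G.circChrom ≤ 4 * (k : ℝ) / (2 * (k : ℝ) - 1) ↔ G.SwHom (negCycle (2 * k)) := by
  obtain ⟨c, hc⟩ := hbip
  have hkR : (2:ℝ) ≤ (k:ℝ) := by exact_mod_cast hk
  have hden : (0:ℝ) < 2*(k:ℝ)-1 := by linarith
  set r₀ : ℝ := 4 * (k : ℝ) / (2 * (k : ℝ) - 1) with hr₀def
  have hr0 : 0 < r₀ := by rw [hr₀def]; positivity
  have hr2 : 2 ≤ r₀ := by rw [hr₀def, le_div_iff₀ hden]; linarith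
  have hr1 : 1 ≤ r₀ := by linarith
  have hbdd : BddBelow {r : ℝ | 1 ≤ r ∧ ∃ φ : V → ℝ, G.IsCircColoring r φ} :=
    ⟨1, fun x hx => hx.1⟩
  constructor
  · intro hle
    have hle' : sInf {r : ℝ | 1 ≤ r ∧ ∃ φ : V → ℝ, G.IsCircColoring r φ} ≤ r₀ := hle
    -- the set is nonempty: the trivial 4-coloring along the bipartition
    have hφ4 : G.IsCircColoring 4 (fun v => if c v then 1 else 0) := by
      constructor
      · intro u v huv
        have h := hc u v (Or.inl huv)
        show 1 ≤ cdist 4 (if c u then (1:ℝ) else 0) (if c v then (1:ℝ) else 0)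
        rcases Bool.eq_false_or_eq_true (c u) with hcu | hcu <;>
          rcases Bool.eq_false_or_eq_true (c v) with hcv | hcv <;>
          rw [hcu, hcv] at h ⊢ <;>
          simp only [Bool.false_eq_true, ite_true, ite_false]
        · exact absurd rfl h
        · exact one_le_cdist_of_diff (by norm_num) 0 (Or.inl (by push_cast; norm_num))
        · exact one_le_cdist_of_diff (by norm_num) 0 (Or.inr (by push_cast; norm_num))
        · exact absurd rfl h
      · intro u v huv
        have h := hc u v (Or.inr huv)
        show 1 ≤ cdist 4 (if c u then (1:ℝ) else 0) ((if c v then (1:ℝ) else 0) + 4/2)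
        rcases Bool.eq_false_or_eq_true (c u) with hcu | hcu <;>
          rcases Bool.eq_false_or_eq_true (c v) with hcv | hcv <;>
          rw [hcu, hcv] at h ⊢ <;>
          simp only [Bool.false_eq_true, ite_true, ite_false]
        · exact absurd rfl h
        · exact one_le_cdist_of_diff (by norm_num) 0 (Or.inr (by push_cast; norm_num))
        · exact one_le_cdist_of_diff (by norm_num) (-1) (Or.inl (by push_cast; norm_num))
        · exact absurd rfl h
    have hSne : Set.Nonempty {r : ℝ | 1 ≤ r ∧ ∃ φ : V → ℝ, G.IsCircColoring r φ} :=
      ⟨4, by norm_num, _, hφ4⟩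
    -- a sequence of almost-r₀-colorings
    set γ : ℕ → ℝ := fun n => r₀ / (r₀ + 1/((n:ℝ)+1)) with hγdef
    have hseq : ∀ n : ℕ, ∃ ψ : V → ℝ, (∀ v, 0 ≤ ψ v ∧ ψ v ≤ r₀) ∧
        (∀ u v, G.pos u v → γ n ≤ cdist r₀ (ψ u) (ψ v)) ∧
        (∀ u v, G.neg u v → γ n ≤ cdist r₀ (ψ u) (ψ v + r₀/2)) := by
      intro n
      have hpos1 : (0:ℝ) < 1/((n:ℝ)+1) := by positivity
      have h1 : sInf {r : ℝ | 1 ≤ r ∧ ∃ φ : V → ℝ, G.IsCircColoring r φ} < r₀ + 1/((n:ℝ)+1) := by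
        linarith
      obtain ⟨x, hxS, hxlt⟩ := exists_lt_of_csInf_lt hSne h1
      obtain ⟨hx1, φx, hφx⟩ := hxS
      have hx0 : 0 < x := by linarith
      obtain ⟨cc, hccdef⟩ : ∃ cc : ℝ, cc = r₀ / x := ⟨_, rfl⟩
      have hcn : 0 < cc := by rw [hccdef]; positivity
      have hγle : γ n ≤ cc := by
        rw [hγdef, hccdef]
        exact div_le_div_of_nonneg_left hr0.le hx0 hxlt.le
      have hsc : r₀ = cc * x := by rw [hccdef]; field_simp
      -- scaled coloring
      have hcolsc : ∀ u v : V, G.pos u v → γ n ≤ cdist r₀ (cc * φx u) (cc * φx v) := by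
        intro u v huv
        rw [hsc, cdist_homog hx0 hcn]
        have := hφx.1 u v huv
        nlinarith
      have hcolscn : ∀ u v : V, G.neg u v →
          γ n ≤ cdist r₀ (cc * φx u) (cc * φx v + r₀/2) := by
        intro u v huv
        have he : cc * φx v + r₀/2 = cc * (φx v + x/2) := by
          rw [hsc]; ring
        rw [he, hsc, cdist_homog hx0 hcn]
        have := hφx.2 u v huv
        nlinarith
      -- normalize into [0, r₀)
      refine ⟨fun v => rmod (cc * φx v) r₀, fun v => ⟨rmod_nonneg hr0 _, (rmod_lt hr0 _).le⟩,
        ?_, ?_⟩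
      · intro u v huv
        show γ n ≤ cdist r₀ (rmod (cc * φx u) r₀) (rmod (cc * φx v) r₀)
        obtain ⟨mu, hmu⟩ := rmod_spec hr0 (cc * φx u)
        obtain ⟨mv, hmv⟩ := rmod_spec hr0 (cc * φx v)
        rw [hmu, hmv, cdist_add_int_mul hr0, cdist_comm, cdist_add_int_mul hr0, cdist_comm]
        exact hcolsc u v huv
      · intro u v huv
        show γ n ≤ cdist r₀ (rmod (cc * φx u) r₀) (rmod (cc * φx v) r₀ + r₀/2)
        obtain ⟨mu, hmu⟩ := rmod_spec hr0 (cc * φx u)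
        obtain ⟨mv, hmv⟩ := rmod_spec hr0 (cc * φx v)
        rw [hmu, hmv, cdist_add_int_mul hr0,
          show cc * φx v + mv * r₀ + r₀/2 = (cc * φx v + r₀/2) + mv * r₀ by ring,
          cdist_comm, cdist_add_int_mul hr0, cdist_comm]
        exact hcolscn u v huv
    choose ψ hψIcc hψpos hψneg using hseq
    -- compactness: extract a convergent subsequence
    have hcpt : IsCompact (Set.Icc (fun _ : V => (0:ℝ)) (fun _ => r₀)) := isCompact_Icc
    have hmemseq : ∀ n, ψ n ∈ Set.Icc (fun _ : V => (0:ℝ)) (fun _ => r₀) := by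
      intro n
      rw [Set.mem_Icc]
      exact ⟨fun v => (hψIcc n v).1, fun v => (hψIcc n v).2⟩
    obtain ⟨psiL, _, g, hg, htend⟩ := hcpt.tendsto_subseq hmemseq
    have hpt : ∀ v, Filter.Tendsto (fun n => ψ (g n) v) Filter.atTop (𝓝 (psiL v)) := by
      intro v
      exact (tendsto_pi_nhds.1 htend) v
    have hγ : Filter.Tendsto γ Filter.atTop (𝓝 1) := by
      have h1 : Filter.Tendsto (fun n : ℕ => r₀ + 1/((n:ℝ)+1)) Filter.atTop (𝓝 (r₀ + 0)) :=
        tendsto_const_nhds.add tendsto_one_div_add_atTop_nhds_zero_nat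
      rw [add_zero] at h1
      have h2 : Filter.Tendsto (fun n : ℕ => r₀ / (r₀ + 1/((n:ℝ)+1))) Filter.atTop
          (𝓝 (r₀ / r₀)) := tendsto_const_nhds.div h1 hr0.ne'
      simpa [hγdef, div_self hr0.ne'] using h2
    have hγ' : Filter.Tendsto (fun n => γ (g n)) Filter.atTop (𝓝 1) :=
      hγ.comp hg.tendsto_atTop
    have key : ∀ (x y : ℕ → ℝ) (X Y : ℝ), Filter.Tendsto x Filter.atTop (𝓝 X) →
        Filter.Tendsto y Filter.atTop (𝓝 Y) →
        (∀ n, γ (g n) ≤ cdist r₀ (x n) (y n)) → 1 ≤ cdist r₀ X Y := by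
      intro x y X Y hx hy hbound
      have h1 : Filter.Tendsto (fun n => |x n - X|) Filter.atTop (𝓝 0) := by
        have h1' : Filter.Tendsto (fun n => x n - X) Filter.atTop (𝓝 (X - X)) :=
          hx.sub tendsto_const_nhds
        rw [sub_self] at h1'
        simpa using h1'.abs
      have h2 : Filter.Tendsto (fun n => |Y - y n|) Filter.atTop (𝓝 0) := by
        have h2' : Filter.Tendsto (fun n => Y - y n) Filter.atTop (𝓝 (Y - Y)) :=
          tendsto_const_nhds.sub hy
        rw [sub_self] at h2'
        simpa using h2'.abs
      have hL : Filter.Tendsto (fun n => γ (g n) - |x n - X| - |Y - y n|) Filter.atTop (𝓝 1) := by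
        have := (hγ'.sub h1).sub h2
        simpa using this
      refine le_of_tendsto hL (Filter.Eventually.of_forall fun n => ?_)
      have hlip := cdist_lipschitz hr0 X (x n) Y (y n)
      linarith [hbound n]
    have hcolL : G.IsCircColoring r₀ psiL := by
      constructor
      · intro u v huv
        exact key _ _ _ _ (hpt u) (hpt v) (fun n => hψpos (g n) u v huv)
      · intro u v huv
        refine key (fun n => ψ (g n) u) (fun n => ψ (g n) v + r₀/2) _ _ (hpt u)
          ((hpt v).add_const (r₀/2)) (fun n => hψneg (g n) u v huv)
    exact discretize G c hc hk psiL hcolL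
  · intro hhom
    obtain ⟨s, f, hf⟩ := hhom
    have hcol := pullback G (negCycle (2*k)) s f hf r₀ hr0 _ (negCycle_coloring k hk)
    exact csInf_le hbdd ⟨hr1, _, hcol⟩
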